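/- Let each fᵢ : X → ℝ be L-smooth and τ-weakly convex (0 ≤ τ ≤ L), and f = (1/n)∑ᵢ fᵢ. Then for all x, y ∈ X: (1/n)∑ᵢ ‖∇fᵢ(x) − ∇fᵢ(y)‖² ≤ (L − τ)⟨∇f(x) − ∇f(y), x − y⟩ + Lτ‖x − y‖². -/

import Mathlib

/-!
Adding `τ/2‖·‖²` makes each `fᵢ` convex with `(L + τ)`-Lipschitz gradient `∇fᵢ + τ • id`. Such a
function has a `1/(L + τ)`-cocoercive gradient (Baillon–Haddad: combine the first-order convexity
inequality with the descent lemma for the function tilted by `-⟪∇g x, ·⟫`, which is minimal at `x`).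
Expanding cocoercivity of `∇fᵢ + τ • id` gives the inequality for each `fᵢ`, and it survives
averaging since `∇f` is the mean of the `∇fᵢ`.
-/

open scoped RealInnerProductSpace

open InnerProductSpace Set

section GradientCalculus

variable {X : Type*} [NormedAddCommGroup X] [InnerProductSpace ℝ X] [CompleteSpace X]
  {f g : X → ℝ} {f' g' x : X}

theorem HasGradientAt.add (hf : HasGradientAt f f' x) (hg : HasGradientAt g g' x) :
    HasGradientAt (fun y => f y + g y) (f' + g') x := by
  rw [hasGradientAt_iff_hasFDerivAt, map_add]
  exact hf.hasFDerivAt.add hg.hasFDerivAt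

theorem HasGradientAt.sub (hf : HasGradientAt f f' x) (hg : HasGradientAt g g' x) :
    HasGradientAt (fun y => f y - g y) (f' - g') x := by
  rw [hasGradientAt_iff_hasFDerivAt, map_sub]
  exact hf.hasFDerivAt.sub hg.hasFDerivAt

theorem HasGradientAt.const_mul (c : ℝ) (hf : HasGradientAt f f' x) :
    HasGradientAt (fun y => c * f y) (c • f') x := by
  rw [hasGradientAt_iff_hasFDerivAt, map_smul]
  exact hf.hasFDerivAt.const_mul c

theorem HasGradientAt.fun_sum {ι : Type*} (s : Finset ι) {f : ι → X → ℝ} {f' : ι → X}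
    (h : ∀ i ∈ s, HasGradientAt (f i) (f' i) x) :
    HasGradientAt (fun y => ∑ i ∈ s, f i y) (∑ i ∈ s, f' i) x := by
  rw [hasGradientAt_iff_hasFDerivAt, map_sum]
  exact HasFDerivAt.fun_sum fun i hi => (h i hi).hasFDerivAt

theorem hasGradientAt_inner_right (v x : X) : HasGradientAt (fun y => ⟪v, y⟫) v x :=
  (toDual ℝ X v).hasFDerivAt

theorem hasGradientAt_norm_sq (x : X) : HasGradientAt (fun y => ‖y‖ ^ 2) ((2 : ℝ) • x) x := by
  rw [hasGradientAt_iff_hasFDerivAt]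
  refine (hasStrictFDerivAt_norm_sq x).hasFDerivAt.congr_fderiv ?_
  ext y
  simp [two_mul]

theorem HasGradientAt.hasDerivAt_comp_add_smul {d : X} {t : ℝ}
    (hf : HasGradientAt f f' (x + t • d)) :
    HasDerivAt (fun s : ℝ => f (x + s • d)) ⟪f', d⟫ t := by
  have hline : HasDerivAt (fun s : ℝ => x + s • d) d t := by
    simpa using ((hasDerivAt_id t).smul_const d).const_add x
  simpa [toDual_apply_apply, Function.comp_def] using hf.hasFDerivAt.comp_hasDerivAt t hline

end GradientCalculus

section SmoothConvex

variable {X : Type*} [NormedAddCommGroup X] [InnerProductSpace ℝ X] [CompleteSpace X]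
  {g : X → ℝ} {G : X → X} {M : ℝ}

theorem ConvexOn.inner_le_sub_of_hasGradientAt (hconv : ConvexOn ℝ univ g) {x g' : X}
    (hg : HasGradientAt g g' x) (y : X) : ⟪g', y - x⟫ ≤ g y - g x := by
  have hline : ConvexOn ℝ univ (fun s : ℝ => g (x + s • (y - x))) := by
    have hcomp : g ∘ AffineMap.lineMap x y = fun s : ℝ => g (x + s • (y - x)) := by
      ext s
      simp [AffineMap.lineMap_apply, add_comm]
    simpa [hcomp] using hconv.comp_affineMap (AffineMap.lineMap x y)
  have hderiv : HasDerivAt (fun s : ℝ => g (x + s • (y - x))) ⟪g', y - x⟫ 0 :=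
    HasGradientAt.hasDerivAt_comp_add_smul (by simpa using hg)
  simpa [slope_def_field] using
    hline.le_slope_of_hasDerivAt (mem_univ 0) (mem_univ 1) one_pos hderiv

theorem le_add_inner_add_norm_sq_of_gradient_lipschitz (hg : ∀ z, HasGradientAt g (G z) z)
    (hG : ∀ a b, ‖G a - G b‖ ≤ M * ‖a - b‖) (x y : X) :
    g y ≤ g x + ⟪G x, y - x⟫ + M / 2 * ‖y - x‖ ^ 2 := by
  set d := y - x
  set ψ : ℝ → ℝ := fun t => g (x + t • d) - t * ⟪G x, d⟫ - M / 2 * t ^ 2 * ‖d‖ ^ 2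
  have hψ : ∀ t, HasDerivAt ψ (⟪G (x + t • d) - G x, d⟫ - M * t * ‖d‖ ^ 2) t := by
    intro t
    have hquad : HasDerivAt (fun t : ℝ => M / 2 * t ^ 2 * ‖d‖ ^ 2) (M * t * ‖d‖ ^ 2) t :=
      (((hasDerivAt_pow 2 t).const_mul (M / 2)).mul_const (‖d‖ ^ 2)).congr_deriv
        (by simp only [Nat.cast_ofNat, Nat.add_one_sub_one, pow_one]; ring)
    have hlin : HasDerivAt (fun t : ℝ => t * ⟪G x, d⟫) ⟪G x, d⟫ t := by
      simpa using (hasDerivAt_id t).mul_const ⟪G x, d⟫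
    rw [inner_sub_left]
    exact ((hg _).hasDerivAt_comp_add_smul.sub hlin).sub hquad
  have hanti : AntitoneOn ψ (Icc 0 1) := by
    refine antitoneOn_of_deriv_nonpos (convex_Icc 0 1)
      (fun t _ => (hψ t).continuousAt.continuousWithinAt)
      (fun t _ => (hψ t).differentiableAt.differentiableWithinAt) fun t ht => ?_
    rw [interior_Icc] at ht
    rw [(hψ t).deriv, sub_nonpos]
    calc ⟪G (x + t • d) - G x, d⟫ ≤ ‖G (x + t • d) - G x‖ * ‖d‖ := real_inner_le_norm _ _
      _ ≤ M * ‖t • d‖ * ‖d‖ := by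
        gcongr
        simpa using hG (x + t • d) x
      _ = M * t * ‖d‖ ^ 2 := by rw [norm_smul, Real.norm_of_nonneg ht.1.le]; ring
  have h01 := hanti (left_mem_Icc.mpr zero_le_one) (right_mem_Icc.mpr zero_le_one) zero_le_one
  simp only [ψ, d, one_smul, add_sub_cancel, zero_smul, add_zero, zero_mul, sub_zero,
    one_mul, one_pow] at h01
  linarith

theorem ConvexOn.add_norm_sq_le_of_gradient_eq_zero (hconv : ConvexOn ℝ univ g)
    (hg : ∀ z, HasGradientAt g (G z) z) (hG : ∀ a b, ‖G a - G b‖ ≤ M * ‖a - b‖) (hM : 0 < M)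
    {x : X} (hx : G x = 0) (y : X) :
    g x + 1 / (2 * M) * ‖G y‖ ^ 2 ≤ g y := by
  -- `x` minimizes `g`, and the gradient step `z` from `y` lowers `g y` by at least `‖G y‖²/(2M)`
  set z := y - M⁻¹ • G y
  have hmin : g x ≤ g z := by
    simpa [hx] using hconv.inner_le_sub_of_hasGradientAt (hg x) z
  have hstep : g z ≤ g y + ⟪G y, z - y⟫ + M / 2 * ‖z - y‖ ^ 2 :=
    le_add_inner_add_norm_sq_of_gradient_lipschitz hg hG y z
  have hzy : z - y = -(M⁻¹ • G y) := by simp [z]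
  rw [hzy, inner_neg_right, real_inner_smul_right, real_inner_self_eq_norm_sq, norm_neg,
    norm_smul, Real.norm_of_nonneg (inv_nonneg.mpr hM.le)] at hstep
  have hval : ‖G y‖ ^ 2 / (2 * M) = M⁻¹ * ‖G y‖ ^ 2 - M / 2 * (M⁻¹ * ‖G y‖) ^ 2 := by
    field_simp
    ring
  rw [one_div_mul_eq_div]
  linarith

theorem ConvexOn.add_inner_add_norm_sq_le (hconv : ConvexOn ℝ univ g)
    (hg : ∀ z, HasGradientAt g (G z) z) (hG : ∀ a b, ‖G a - G b‖ ≤ M * ‖a - b‖) (hM : 0 < M)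
    (x y : X) :
    g x + ⟪G x, y - x⟫ + 1 / (2 * M) * ‖G y - G x‖ ^ 2 ≤ g y := by
  have hconv' := hconv.sub ((innerₛₗ ℝ (G x)).concaveOn convex_univ)
  have htilt := hconv'.add_norm_sq_le_of_gradient_eq_zero
    (fun z => (hg z).sub (hasGradientAt_inner_right (G x) z)) (fun a b => by simpa using hG a b)
    hM (sub_self (G x)) y
  simp only [Pi.sub_apply, innerₛₗ_apply_apply] at htilt
  rw [inner_sub_right]
  linarith

theorem ConvexOn.norm_sub_sq_le_mul_inner (hconv : ConvexOn ℝ univ g)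
    (hg : ∀ z, HasGradientAt g (G z) z) (hG : ∀ a b, ‖G a - G b‖ ≤ M * ‖a - b‖) (hM : 0 < M)
    (x y : X) :
    ‖G x - G y‖ ^ 2 ≤ M * ⟪G x - G y, x - y⟫ := by
  have hxy := hconv.add_inner_add_norm_sq_le hg hG hM x y
  have hyx := hconv.add_inner_add_norm_sq_le hg hG hM y x
  rw [norm_sub_rev] at hxy
  have hsum : ‖G x - G y‖ ^ 2 / M ≤ ⟪G x - G y, x - y⟫ := by
    have hflip : ⟪G x, y - x⟫ = -⟪G x, x - y⟫ := by rw [← inner_neg_right, neg_sub]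
    rw [inner_sub_left]
    have hhalf : ‖G x - G y‖ ^ 2 / M = 2 * (1 / (2 * M) * ‖G x - G y‖ ^ 2) := by field_simp
    linarith
  rwa [div_le_iff₀' hM] at hsum

end SmoothConvex

theorem norm_sub_sq_le_of_convexOn_add_norm_sq {X : Type*} [NormedAddCommGroup X]
    [InnerProductSpace ℝ X] [CompleteSpace X] {f : X → ℝ} {f' : X → X} {L τ : ℝ}
    (hf : ∀ z, HasGradientAt f (f' z) z) (hlip : ∀ a b, ‖f' a - f' b‖ ≤ L * ‖a - b‖)
    (hwc : ConvexOn ℝ univ fun z => f z + τ / 2 * ‖z‖ ^ 2) (hL : 0 < L) (hτ : 0 ≤ τ) (x y : X) :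
    ‖f' x - f' y‖ ^ 2 ≤ (L - τ) * ⟪f' x - f' y, x - y⟫ + L * τ * ‖x - y‖ ^ 2 := by
  have hsplit : ∀ a b, (f' a + τ • a) - (f' b + τ • b) = (f' a - f' b) + τ • (a - b) := by
    intro a b
    rw [smul_sub]
    abel
  have hg : ∀ z, HasGradientAt (fun z => f z + τ / 2 * ‖z‖ ^ 2) (f' z + τ • z) z := fun z => by
    have h := (hf z).add ((hasGradientAt_norm_sq z).const_mul (τ / 2))
    rwa [smul_smul, div_mul_cancel₀ τ two_ne_zero] at h
  have hG : ∀ a b, ‖(f' a + τ • a) - (f' b + τ • b)‖ ≤ (L + τ) * ‖a - b‖ := fun a b =>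
    calc _ ≤ ‖f' a - f' b‖ + ‖τ • (a - b)‖ := hsplit a b ▸ norm_add_le _ _
      _ ≤ L * ‖a - b‖ + τ * ‖a - b‖ := by
        rw [norm_smul, Real.norm_of_nonneg hτ]
        exact add_le_add_left (hlip a b) _
      _ = (L + τ) * ‖a - b‖ := by ring
  have hco := hwc.norm_sub_sq_le_mul_inner hg hG (by positivity) x y
  rw [hsplit, norm_add_sq_real, inner_add_left, real_inner_smul_right, real_inner_smul_left,
    norm_smul, Real.norm_of_nonneg hτ, real_inner_self_eq_norm_sq] at hco
  linarith

theorem mean_gradient_interpolation_general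
    {X : Type*} [NormedAddCommGroup X] [InnerProductSpace ℝ X]
    [FiniteDimensional ℝ X]
    (n : ℕ) (hn : 0 < n) (f : Fin n → X → ℝ) (L τ : ℝ)
    (hL : 0 < L) (hτ0 : 0 ≤ τ)
    (hdiff : ∀ i, Differentiable ℝ (f i))
    (hlip : ∀ i, ∀ x y : X, ‖gradient (f i) x - gradient (f i) y‖ ≤ L * ‖x - y‖)
    (hwc : ∀ i, ConvexOn ℝ Set.univ (fun x => f i x + τ / 2 * ‖x‖ ^ 2))
    (F : X → ℝ) (hF : F = fun y => (1 / n : ℝ) * ∑ i, f i y)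
    (x y : X) :
    (1 / n : ℝ) * ∑ i, ‖gradient (f i) x - gradient (f i) y‖ ^ 2 ≤
      (L - τ) * ⟪gradient F x - gradient F y, x - y⟫ + L * τ * ‖x - y‖ ^ 2 := by
  have hgrad : ∀ i z, HasGradientAt (f i) (gradient (f i) z) z :=
    fun i z => (hdiff i z).hasGradientAt
  have hgradF : ∀ z, gradient F z = (1 / n : ℝ) • ∑ i, gradient (f i) z := fun z => by
    subst hF
    exact ((HasGradientAt.fun_sum _ fun i _ => hgrad i z).const_mul _).gradient
  have hn' : (n : ℝ) ≠ 0 := by exact_mod_cast hn.ne'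
  calc (1 / n : ℝ) * ∑ i, ‖gradient (f i) x - gradient (f i) y‖ ^ 2
      ≤ (1 / n : ℝ) * ∑ i, ((L - τ) * ⟪gradient (f i) x - gradient (f i) y, x - y⟫
          + L * τ * ‖x - y‖ ^ 2) := by
        gcongr with i
        exact norm_sub_sq_le_of_convexOn_add_norm_sq (hgrad i) (hlip i) (hwc i) hL hτ0 x y
    _ = (L - τ) * ⟪gradient F x - gradient F y, x - y⟫ + L * τ * ‖x - y‖ ^ 2 := by
        rw [hgradF, hgradF, ← smul_sub, ← Finset.sum_sub_distrib, real_inner_smul_left,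
          sum_inner, Finset.sum_add_distrib, ← Finset.mul_sum, Finset.sum_const,
          Finset.card_univ, Fintype.card_fin, nsmul_eq_mul]
        field_simp

/-- If each `fᵢ` is `L`-smooth and `τ`-weakly convex and `f = (1/n)∑ᵢ fᵢ`, then
`(1/n)∑ᵢ‖∇fᵢ(x) − ∇fᵢ(y)‖² ≤ (L − τ)⟨∇f(x) − ∇f(y), x − y⟩ + Lτ‖x − y‖²`. -/
theorem mean_gradient_interpolation
    {X : Type*} [NormedAddCommGroup X] [InnerProductSpace ℝ X]
    [FiniteDimensional ℝ X]
    (n : ℕ) (hn : 0 < n) (f : Fin n → X → ℝ) (L τ : ℝ)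
    (hL : 0 < L) (hτ0 : 0 ≤ τ) (hτL : τ ≤ L)
    (hdiff : ∀ i, Differentiable ℝ (f i))
    (hlip : ∀ i, ∀ x y : X, ‖gradient (f i) x - gradient (f i) y‖ ≤ L * ‖x - y‖)
    (hwc : ∀ i, ConvexOn ℝ Set.univ (fun x => f i x + τ / 2 * ‖x‖ ^ 2))
    (F : X → ℝ) (hF : F = fun y => (1 / n : ℝ) * ∑ i, f i y)
    (x y : X) :
    (1 / n : ℝ) * ∑ i, ‖gradient (f i) x - gradient (f i) y‖ ^ 2 ≤
      (L - τ) * ⟪gradient F x - gradient F y, x - y⟫ + L * τ * ‖x - y‖ ^ 2 :=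
  mean_gradient_interpolation_general n hn f L τ hL hτ0 hdiff hlip hwc F hF x y
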